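/- Let δ be a smooth symmetric diagonal and K_δ(u,v) = min{u, v, (δ(u)+δ(v))/2} its diagonal copula. Then ρ(K_δ) ≤ 1 − (2/3)·(1 − φ(K_δ))², where ρ(K_δ) = 12·∫₀¹∫₀¹ K_δ(u,v) du dv − 3 and φ(K_δ) = 6·∫₀¹ K_δ(u,u) du − 2 = 6·∫₀¹ δ(u) du − 2 (since the diagonal of K_δ is δ). -/

import Mathlib

open MeasureTheory Set

noncomputable section

/-- A smooth symmetric diagonal `δ` with (continuous) derivative `δ'`:
continuous, strictly increasing, 2-Lipschitz, `δ(0)=0`, `δ(1)=1`, `δ(t) ≤ t`,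
satisfying the symmetry identity `δ(u) = 2u - 1 + δ(1-u)`, differentiable with
continuous derivative, and `0 < δ'(u) < 2` for all but finitely many `u`. -/
def SmoothSymDiagonal (δ δ' : ℝ → ℝ) : Prop :=
  ContinuousOn δ (Icc 0 1) ∧
  StrictMonoOn δ (Icc 0 1) ∧
  (∀ u ∈ Icc (0:ℝ) 1, ∀ v ∈ Icc (0:ℝ) 1, |δ u - δ v| ≤ 2 * |u - v|) ∧
  δ 0 = 0 ∧ δ 1 = 1 ∧
  (∀ t ∈ Icc (0:ℝ) 1, δ t ∈ Icc (0:ℝ) 1 ∧ δ t ≤ t) ∧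
  (∀ u ∈ Icc (0:ℝ) 1, δ u = 2 * u - 1 + δ (1 - u)) ∧
  (∀ u ∈ Icc (0:ℝ) 1, HasDerivWithinAt δ (δ' u) (Icc 0 1) u) ∧
  ContinuousOn δ' (Icc 0 1) ∧
  {u ∈ Icc (0:ℝ) 1 | ¬(0 < δ' u ∧ δ' u < 2)}.Finite

/-- `finv` is the inverse of the bijection `f : [0,1] → [0,1]`. -/
def InverseOnUnitInterval (f finv : ℝ → ℝ) : Prop :=
  (∀ t ∈ Icc (0:ℝ) 1, finv t ∈ Icc (0:ℝ) 1) ∧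
  (∀ t ∈ Icc (0:ℝ) 1, f (finv t) = t) ∧
  (∀ t ∈ Icc (0:ℝ) 1, finv (f t) = t)

/-- The diagonal copula `K_δ(u,v) = min {u, v, (δ(u)+δ(v))/2}`. -/
def diagCopula (δ : ℝ → ℝ) : ℝ → ℝ → ℝ := fun u v => min (min u v) ((δ u + δ v) / 2)

/-- Spearman's rho of a copula. -/
def spearmanRho (C : ℝ → ℝ → ℝ) : ℝ :=
  12 * (∫ u in (0:ℝ)..1, ∫ v in (0:ℝ)..1, C u v) - 3

/-- Spearman's footrule of a copula. -/
def spearmanFootrule (C : ℝ → ℝ → ℝ) : ℝ :=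
  6 * (∫ u in (0:ℝ)..1, C u u) - 2

/-!
Write `g u = u - δ u`. Then `K_δ(u,v) = min u v - D(u,v)` with
`D(u,v) = max ((g u + g v - |u - v|) / 2) 0` (`diagDefect g`), so `ρ = 1 - 12 ∬ D` and
`φ = 1 - 6 G` with `G = ∫ g`, and the claim becomes `2 G² ≤ ∬ D`. The Fréchet bounds
`max (2u - 1) 0 ≤ δ u ≤ u` (the lower one from the symmetry identity) say
`0 ≤ g u ≤ min u (1 - u)`. Bounding `D` below by `(g u + g v - |u - v|) / 2` on the band
`|u - v| ≤ ℓ` of the unit square gives `∬ D ≥ 2ℓG - ℓ² / 2`: clipping the band at the edges of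
the square costs `ℓ³/3` in each of the two `g`-terms, and saves exactly that much in the
`|u - v|`-term. Take `ℓ = 2G`.

We work with a continuous extension of `δ` beyond `[0, 1]`, which changes none of the integrals.
-/

open intervalIntegral

theorem ContinuousOn.exists_continuous_eqOn_Icc {f : ℝ → ℝ} {a b : ℝ} (hab : a ≤ b)
    (hf : ContinuousOn f (Icc a b)) : ∃ f₀ : ℝ → ℝ, Continuous f₀ ∧ EqOn f₀ f (Icc a b) :=
  ⟨fun x => f (projIcc a b hab x),
    hf.comp_continuous (continuous_subtype_val.comp continuous_projIcc)
      fun x => (projIcc a b hab x).2,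
    fun x hx => by simp [projIcc_of_mem hab hx]⟩

theorem integral_eq_add_of_eqOn {f f₁ f₂ : ℝ → ℝ} {a b c : ℝ} (hac : a ≤ c) (hcb : c ≤ b)
    (hf : Continuous f) (h₁ : EqOn f f₁ (Icc a c)) (h₂ : EqOn f f₂ (Icc c b)) :
    ∫ x in a..b, f x = (∫ x in a..c, f₁ x) + ∫ x in c..b, f₂ x := by
  rw [← integral_add_adjacent_intervals (hf.intervalIntegrable a c) (hf.intervalIntegrable c b)]
  congr 1
  · exact integral_congr (by rwa [uIcc_of_le hac])
  · exact integral_congr (by rwa [uIcc_of_le hcb])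

theorem integral_comp_one_sub (f : ℝ → ℝ) :
    ∫ x in (0:ℝ)..1, f (1 - x) = ∫ x in (0:ℝ)..1, f x := by
  simp [integral_comp_sub_left f (1:ℝ) (a := 0) (b := 1)]

theorem integral_abs_sub_eq (u : ℝ) {l r : ℝ} (hl : 0 ≤ l) (hr : 0 ≤ r) :
    ∫ v in u - l..u + r, |u - v| = (l ^ 2 + r ^ 2) / 2 := by
  rw [integral_comp_sub_left (fun x => |x|), sub_add_cancel_left, sub_sub_cancel,
    integral_eq_add_of_eqOn (f₁ := fun x => -x) (f₂ := fun x => x) (neg_nonpos.2 hr) hl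
      continuous_abs (fun x hx => abs_of_nonpos hx.2) (fun x hx => abs_of_nonneg hx.1),
    intervalIntegral.integral_neg, integral_id, integral_id]
  ring

theorem integral_mul_sub_min {ℓ : ℝ} (h₀ : 0 ≤ ℓ) (h₁ : ℓ ≤ 1) :
    ∫ u in (0:ℝ)..1, u * (ℓ - min u ℓ) = ℓ ^ 3 / 6 := by
  rw [integral_eq_add_of_eqOn (f₁ := fun u => ℓ * u - u ^ 2) (f₂ := fun _ => 0) h₀ h₁
    (by fun_prop : Continuous fun u : ℝ => u * (ℓ - min u ℓ))
    (fun u hu => by simp only [min_eq_left hu.2]; ring)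
    (fun u hu => by simp [min_eq_right hu.1])]
  rw [intervalIntegral.integral_sub ((continuous_const_mul ℓ).intervalIntegrable _ _)
      ((continuous_pow 2).intervalIntegrable _ _), intervalIntegral.integral_const_mul,
    integral_id, integral_pow, intervalIntegral.integral_zero]
  ring

theorem integral_min_sq {ℓ : ℝ} (h₀ : 0 ≤ ℓ) (h₁ : ℓ ≤ 1) :
    ∫ u in (0:ℝ)..1, min u ℓ ^ 2 = ℓ ^ 2 - 2 * ℓ ^ 3 / 3 := by
  rw [integral_eq_add_of_eqOn (f₁ := fun u => u ^ 2) (f₂ := fun _ => ℓ ^ 2) h₀ h₁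
    (by fun_prop : Continuous fun u : ℝ => min u ℓ ^ 2)
    (fun u hu => by simp [min_eq_left hu.2]) (fun u hu => by simp [min_eq_right hu.1])]
  simp [integral_pow]
  ring

theorem integral_comp_min_add {F : ℝ → ℝ} (hF : Continuous F) {ℓ : ℝ} (h₀ : 0 ≤ ℓ)
    (h₁ : ℓ ≤ 1) :
    ∫ u in (0:ℝ)..1, F (min 1 (u + ℓ)) = (∫ t in ℓ..1, F t) + ℓ * F 1 := by
  rw [integral_eq_add_of_eqOn (f₁ := fun u => F (u + ℓ)) (f₂ := fun _ => F 1) (c := 1 - ℓ)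
    (by linarith) (by linarith) (by fun_prop : Continuous fun u => F (min 1 (u + ℓ)))
    (fun u hu => by simp [min_eq_right (show u + ℓ ≤ 1 by linarith [hu.2])])
    (fun u hu => by simp [min_eq_left (show 1 ≤ u + ℓ by linarith [hu.1])]),
    integral_comp_add_right]
  simp

theorem integral_comp_max_sub {F : ℝ → ℝ} (hF : Continuous F) {ℓ : ℝ} (h₀ : 0 ≤ ℓ)
    (h₁ : ℓ ≤ 1) :
    ∫ u in (0:ℝ)..1, F (max 0 (u - ℓ)) = ℓ * F 0 + ∫ t in (0:ℝ)..1 - ℓ, F t := by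
  rw [integral_eq_add_of_eqOn (f₁ := fun _ => F 0) (f₂ := fun u => F (u - ℓ)) h₀ h₁
    (by fun_prop : Continuous fun u => F (max 0 (u - ℓ)))
    (fun u hu => by simp [max_eq_left (show u - ℓ ≤ 0 by linarith [hu.2])])
    (fun u hu => by simp [max_eq_right (show 0 ≤ u - ℓ by linarith [hu.1])]),
    integral_comp_sub_right]
  simp

theorem continuous_intervalIntegral_of_bounds {g a b : ℝ → ℝ} (hg : Continuous g)
    (ha : Continuous a) (hb : Continuous b) : Continuous fun u => ∫ v in a u..b u, g v := by
  have hF : Continuous fun t => ∫ v in (0:ℝ)..t, g v := by fun_prop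
  refine ((hF.comp hb).sub (hF.comp ha)).congr fun u => ?_
  exact integral_interval_sub_left (hg.intervalIntegrable _ _) (hg.intervalIntegrable _ _)

def diagDefect (g : ℝ → ℝ) (u v : ℝ) : ℝ := max ((g u + g v - |u - v|) / 2) 0

theorem diagCopula_eq_min_sub_diagDefect (δ : ℝ → ℝ) (u v : ℝ) :
    diagCopula δ u v = min u v - diagDefect (fun t => t - δ t) u v := by
  unfold diagCopula diagDefect
  rcases le_total u v with h | h
  · rw [abs_of_nonpos (sub_nonpos.2 h), min_eq_left h, min_def, max_def]
    split_ifs <;> linarith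
  · rw [abs_of_nonneg (sub_nonneg.2 h), min_eq_right h, min_def, max_def]
    split_ifs <;> linarith

section

variable {g : ℝ → ℝ}

theorem continuous_integral_diagDefect (hg : Continuous g) :
    Continuous fun u => ∫ v in (0:ℝ)..1, diagDefect g u v := by
  unfold diagDefect
  fun_prop

theorem integral_le_sq_div_two (hg : Continuous g) (hgu : ∀ u ∈ Icc (0:ℝ) 1, g u ≤ u) {t : ℝ}
    (ht : t ∈ Icc (0:ℝ) 1) : ∫ v in (0:ℝ)..t, g v ≤ t ^ 2 / 2 := by
  calc ∫ v in (0:ℝ)..t, g v ≤ ∫ v in (0:ℝ)..t, v :=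
        integral_mono_on ht.1 (hg.intervalIntegrable _ _) (continuous_id.intervalIntegrable _ _)
          fun v hv => hgu v ⟨hv.1, hv.2.trans ht.2⟩
    _ = t ^ 2 / 2 := by simp [integral_id]

theorem integral_sub_sq_div_two_le (hg : Continuous g) (hg₁ : ∀ u ∈ Icc (0:ℝ) 1, g u ≤ 1 - u)
    {t : ℝ} (ht : t ∈ Icc (0:ℝ) 1) :
    (∫ v in (0:ℝ)..1, g v) - (1 - t) ^ 2 / 2 ≤ ∫ v in (0:ℝ)..t, g v := by
  have hrefl :
      (∫ v in (0:ℝ)..1, g v) - ∫ v in (0:ℝ)..t, g v = ∫ w in (0:ℝ)..1 - t, g (1 - w) := by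
    rw [integral_interval_sub_left (hg.intervalIntegrable 0 1) (hg.intervalIntegrable 0 t)]
    simp [integral_comp_sub_left g (1:ℝ)]
  have := integral_le_sq_div_two (g := fun w => g (1 - w)) (by fun_prop)
    (fun w hw => by linarith [hg₁ (1 - w) (Icc.mem_iff_one_sub_mem.1 hw)])
    (Icc.mem_iff_one_sub_mem.1 ht)
  linarith

theorem integral_integral_le_cube_div_six (hg : Continuous g) (hgu : ∀ u ∈ Icc (0:ℝ) 1, g u ≤ u)
    {ℓ : ℝ} (h₀ : 0 ≤ ℓ) (h₁ : ℓ ≤ 1) :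
    ∫ t in (0:ℝ)..ℓ, ∫ v in (0:ℝ)..t, g v ≤ ℓ ^ 3 / 6 := by
  calc ∫ t in (0:ℝ)..ℓ, ∫ v in (0:ℝ)..t, g v ≤ ∫ t in (0:ℝ)..ℓ, t ^ 2 / 2 :=
        integral_mono_on h₀ (Continuous.intervalIntegrable (by fun_prop) _ _)
          (Continuous.intervalIntegrable (by fun_prop) _ _)
          fun t ht => integral_le_sq_div_two hg hgu ⟨ht.1, ht.2.trans h₁⟩
    _ = ℓ ^ 3 / 6 := by simp [intervalIntegral.integral_div, integral_pow]; ring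

theorem sub_cube_div_six_le_integral_integral (hg : Continuous g)
    (hg₁ : ∀ u ∈ Icc (0:ℝ) 1, g u ≤ 1 - u) {ℓ : ℝ} (h₀ : 0 ≤ ℓ) (h₁ : ℓ ≤ 1) :
    ℓ * (∫ v in (0:ℝ)..1, g v) - ℓ ^ 3 / 6 ≤ ∫ t in 1 - ℓ..1, ∫ v in (0:ℝ)..t, g v := by
  calc ℓ * (∫ v in (0:ℝ)..1, g v) - ℓ ^ 3 / 6
      = ∫ t in 1 - ℓ..1, ((∫ v in (0:ℝ)..1, g v) - (1 - t) ^ 2 / 2) := by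
        rw [intervalIntegral.integral_sub intervalIntegrable_const
          (Continuous.intervalIntegrable (by fun_prop) _ _), intervalIntegral.integral_const,
          intervalIntegral.integral_div, integral_comp_sub_left (fun x => x ^ 2)]
        simp [integral_pow]
        ring
    _ ≤ ∫ t in 1 - ℓ..1, ∫ v in (0:ℝ)..t, g v :=
        integral_mono_on (by linarith) (Continuous.intervalIntegrable (by fun_prop) _ _)
          (Continuous.intervalIntegrable (by fun_prop) _ _)
          fun t ht => integral_sub_sq_div_two_le hg hg₁ ⟨by linarith [ht.1], ht.2⟩

theorem sub_cube_div_six_le_integral_mul_min (hg : Continuous g)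
    (hgu : ∀ u ∈ Icc (0:ℝ) 1, g u ≤ u) {ℓ : ℝ} (h₀ : 0 ≤ ℓ) (h₁ : ℓ ≤ 1) :
    ℓ * (∫ u in (0:ℝ)..1, g u) - ℓ ^ 3 / 6 ≤ ∫ u in (0:ℝ)..1, g u * min u ℓ := by
  calc ℓ * (∫ u in (0:ℝ)..1, g u) - ℓ ^ 3 / 6
      = ∫ u in (0:ℝ)..1, (ℓ * g u - u * (ℓ - min u ℓ)) := by
        rw [intervalIntegral.integral_sub (Continuous.intervalIntegrable (by fun_prop) _ _)
          (Continuous.intervalIntegrable (by fun_prop) _ _), intervalIntegral.integral_const_mul,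
          integral_mul_sub_min h₀ h₁]
    _ ≤ ∫ u in (0:ℝ)..1, g u * min u ℓ :=
        integral_mono_on zero_le_one (Continuous.intervalIntegrable (by fun_prop) _ _)
          (Continuous.intervalIntegrable (by fun_prop) _ _) fun u hu => by
          nlinarith [mul_le_mul_of_nonneg_left (hgu u hu) (sub_nonneg.2 (min_le_right u ℓ))]

theorem two_mul_sub_le_integral_mul_window (hg : Continuous g)
    (hgu : ∀ u ∈ Icc (0:ℝ) 1, g u ≤ u) (hg₁ : ∀ u ∈ Icc (0:ℝ) 1, g u ≤ 1 - u) {ℓ : ℝ}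
    (h₀ : 0 ≤ ℓ) (h₁ : ℓ ≤ 1) :
    2 * ℓ * (∫ u in (0:ℝ)..1, g u) - ℓ ^ 3 / 3 ≤
      ∫ u in (0:ℝ)..1, g u * (min u ℓ + min (1 - u) ℓ) := by
  have hleft := sub_cube_div_six_le_integral_mul_min hg hgu h₀ h₁
  have hright := sub_cube_div_six_le_integral_mul_min (g := fun w => g (1 - w)) (by fun_prop)
    (fun w hw => by linarith [hg₁ (1 - w) (Icc.mem_iff_one_sub_mem.1 hw)]) h₀ h₁
  rw [integral_comp_one_sub g,
    ← integral_comp_one_sub fun w => g (1 - w) * min w ℓ] at hright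
  simp only [sub_sub_cancel] at hright
  simp only [mul_add]
  rw [intervalIntegral.integral_add (Continuous.intervalIntegrable (by fun_prop) _ _)
    (Continuous.intervalIntegrable (by fun_prop) _ _)]
  linarith

theorem two_mul_sub_le_integral_integral_window (hg : Continuous g)
    (hgu : ∀ u ∈ Icc (0:ℝ) 1, g u ≤ u) (hg₁ : ∀ u ∈ Icc (0:ℝ) 1, g u ≤ 1 - u) {ℓ : ℝ}
    (h₀ : 0 ≤ ℓ) (h₁ : ℓ ≤ 1) :
    2 * ℓ * (∫ u in (0:ℝ)..1, g u) - ℓ ^ 3 / 3 ≤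
      ∫ u in (0:ℝ)..1, ∫ v in u - min u ℓ..u + min (1 - u) ℓ, g v := by
  set F : ℝ → ℝ := fun t => ∫ v in (0:ℝ)..t, g v with hFdef
  have hF : Continuous F := by fun_prop
  have hwindow (u : ℝ) :
      ∫ v in u - min u ℓ..u + min (1 - u) ℓ, g v = F (min 1 (u + ℓ)) - F (max 0 (u - ℓ)) := by
    rw [hFdef, integral_interval_sub_left (hg.intervalIntegrable _ _) (hg.intervalIntegrable _ _),
      ← max_sub_sub_left, sub_self, ← min_add_add_left, add_sub_cancel]
  rw [integral_congr fun u _ => hwindow u,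
    intervalIntegral.integral_sub (Continuous.intervalIntegrable (by fun_prop) _ _)
      (Continuous.intervalIntegrable (by fun_prop) _ _),
    integral_comp_min_add hF h₀ h₁, integral_comp_max_sub hF h₀ h₁,
    ← integral_add_adjacent_intervals (hF.intervalIntegrable ℓ (1 - ℓ))
      (hF.intervalIntegrable _ 1),
    ← integral_add_adjacent_intervals (hF.intervalIntegrable 0 ℓ)
      (hF.intervalIntegrable _ (1 - ℓ))]
  have hF0 : F 0 = 0 := integral_same
  have hlow := integral_integral_le_cube_div_six hg hgu h₀ h₁
  have hhigh := sub_cube_div_six_le_integral_integral hg hg₁ h₀ h₁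
  rw [hF0]
  linarith

theorem le_integral_diagDefect (hg : Continuous g) {u l r : ℝ} (hl : 0 ≤ l) (hlu : l ≤ u)
    (hr : 0 ≤ r) (hru : r ≤ 1 - u) :
    (g u * (l + r) + (∫ v in u - l..u + r, g v) - (l ^ 2 + r ^ 2) / 2) / 2 ≤
      ∫ v in (0:ℝ)..1, diagDefect g u v := by
  have hD : Continuous (diagDefect g u) := by unfold diagDefect; fun_prop
  calc (g u * (l + r) + (∫ v in u - l..u + r, g v) - (l ^ 2 + r ^ 2) / 2) / 2
      = ∫ v in u - l..u + r, (g u + g v - |u - v|) / 2 := by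
        rw [intervalIntegral.integral_div, intervalIntegral.integral_sub
          (Continuous.intervalIntegrable (by fun_prop) _ _)
          (Continuous.intervalIntegrable (by fun_prop) _ _), intervalIntegral.integral_add
          intervalIntegrable_const (hg.intervalIntegrable _ _), intervalIntegral.integral_const,
          integral_abs_sub_eq u hl hr, smul_eq_mul]
        ring
    _ ≤ ∫ v in u - l..u + r, diagDefect g u v :=
        integral_mono_on (by linarith) (Continuous.intervalIntegrable (by fun_prop) _ _)
          (hD.intervalIntegrable _ _) fun v _ => le_max_left _ _
    _ ≤ ∫ v in (0:ℝ)..1, diagDefect g u v :=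
        integral_mono_interval (by linarith) (by linarith) (by linarith)
          (ae_of_all _ fun v => le_max_right _ _) (hD.intervalIntegrable _ _)

theorem le_integral_integral_diagDefect (hg : Continuous g)
    (hgu : ∀ u ∈ Icc (0:ℝ) 1, g u ≤ u) (hg₁ : ∀ u ∈ Icc (0:ℝ) 1, g u ≤ 1 - u) {ℓ : ℝ}
    (h₀ : 0 ≤ ℓ) (h₁ : ℓ ≤ 1) :
    2 * ℓ * (∫ u in (0:ℝ)..1, g u) - ℓ ^ 2 / 2 ≤
      ∫ u in (0:ℝ)..1, ∫ v in (0:ℝ)..1, diagDefect g u v := by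
  have hA := two_mul_sub_le_integral_mul_window hg hgu hg₁ h₀ h₁
  have hB := two_mul_sub_le_integral_integral_window hg hgu hg₁ h₀ h₁
  have hC : ∫ u in (0:ℝ)..1, (min u ℓ ^ 2 + min (1 - u) ℓ ^ 2) / 2 = ℓ ^ 2 - 2 * ℓ ^ 3 / 3 := by
    rw [intervalIntegral.integral_div, intervalIntegral.integral_add
      (Continuous.intervalIntegrable (by fun_prop) _ _)
      (Continuous.intervalIntegrable (by fun_prop) _ _),
      integral_comp_one_sub fun u => min u ℓ ^ 2, integral_min_sq h₀ h₁]
    ring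
  have hBc : Continuous fun u => ∫ v in u - min u ℓ..u + min (1 - u) ℓ, g v :=
    continuous_intervalIntegral_of_bounds hg (by fun_prop) (by fun_prop)
  calc 2 * ℓ * (∫ u in (0:ℝ)..1, g u) - ℓ ^ 2 / 2
      ≤ ∫ u in (0:ℝ)..1, (g u * (min u ℓ + min (1 - u) ℓ) +
          (∫ v in u - min u ℓ..u + min (1 - u) ℓ, g v) -
          (min u ℓ ^ 2 + min (1 - u) ℓ ^ 2) / 2) / 2 := by
        rw [intervalIntegral.integral_div, intervalIntegral.integral_sub
          (Continuous.intervalIntegrable (by fun_prop) _ _)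
          (Continuous.intervalIntegrable (by fun_prop) _ _), intervalIntegral.integral_add
          (Continuous.intervalIntegrable (by fun_prop) _ _) (hBc.intervalIntegrable _ _), hC]
        linarith
    _ ≤ ∫ u in (0:ℝ)..1, ∫ v in (0:ℝ)..1, diagDefect g u v :=
        integral_mono_on zero_le_one (Continuous.intervalIntegrable (by fun_prop) _ _)
          ((continuous_integral_diagDefect hg).intervalIntegrable _ _) fun u hu =>
          le_integral_diagDefect hg (le_min hu.1 h₀) (min_le_left _ _)
            (le_min (by linarith [hu.2]) h₀) (min_le_left _ _)

theorem two_mul_sq_integral_le_integral_integral_diagDefect (hg : Continuous g)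
    (hg₀ : ∀ u ∈ Icc (0:ℝ) 1, 0 ≤ g u) (hgu : ∀ u ∈ Icc (0:ℝ) 1, g u ≤ u)
    (hg₁ : ∀ u ∈ Icc (0:ℝ) 1, g u ≤ 1 - u) :
    2 * (∫ u in (0:ℝ)..1, g u) ^ 2 ≤ ∫ u in (0:ℝ)..1, ∫ v in (0:ℝ)..1, diagDefect g u v := by
  set G := ∫ u in (0:ℝ)..1, g u
  have hG₀ : 0 ≤ G := integral_nonneg zero_le_one hg₀
  have hG₁ : G ≤ 1 / 2 := by
    simpa using integral_le_sq_div_two hg hgu (right_mem_Icc.2 zero_le_one)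
  calc 2 * G ^ 2 = 2 * (2 * G) * G - (2 * G) ^ 2 / 2 := by ring
    _ ≤ _ := le_integral_integral_diagDefect hg hgu hg₁ (by linarith) (by linarith)

end

theorem integral_min_left {u : ℝ} (hu : u ∈ Icc (0:ℝ) 1) :
    ∫ v in (0:ℝ)..1, min u v = u - u ^ 2 / 2 := by
  rw [integral_eq_add_of_eqOn (f₁ := fun v => v) (f₂ := fun _ => u) hu.1 hu.2 (by fun_prop)
    (fun v hv => min_eq_right hv.2) (fun v hv => min_eq_left hv.1)]
  simp [integral_id]
  ring

theorem integral_integral_min : ∫ u in (0:ℝ)..1, ∫ v in (0:ℝ)..1, min u v = 1 / 3 := by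
  rw [integral_congr fun u hu => integral_min_left (by rwa [uIcc_of_le zero_le_one] at hu),
    intervalIntegral.integral_sub (Continuous.intervalIntegrable (by fun_prop) _ _)
      (Continuous.intervalIntegrable (by fun_prop) _ _)]
  simp [integral_id, intervalIntegral.integral_div, integral_pow]
  norm_num

theorem spearmanFootrule_diagCopula {δ : ℝ → ℝ} (hδ : ∀ u ∈ Icc (0:ℝ) 1, δ u ≤ u) :
    spearmanFootrule (diagCopula δ) = 6 * (∫ u in (0:ℝ)..1, δ u) - 2 := by
  unfold spearmanFootrule diagCopula
  congr 2
  refine integral_congr fun u hu => ?_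
  rw [uIcc_of_le zero_le_one] at hu
  simp [min_eq_right (hδ u hu)]

theorem spearmanRho_diagCopula_congr {δ₁ δ₂ : ℝ → ℝ} (h : EqOn δ₁ δ₂ (Icc 0 1)) :
    spearmanRho (diagCopula δ₁) = spearmanRho (diagCopula δ₂) := by
  unfold spearmanRho diagCopula
  congr 2
  refine integral_congr fun u hu => integral_congr fun v hv => ?_
  rw [uIcc_of_le zero_le_one] at hu hv
  simp only [h hu, h hv]

theorem spearmanRho_diagCopula_eq {δ : ℝ → ℝ} (hδ : Continuous δ) :
    spearmanRho (diagCopula δ) =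
      1 - 12 * ∫ u in (0:ℝ)..1, ∫ v in (0:ℝ)..1, diagDefect (fun t => t - δ t) u v := by
  have hg : Continuous fun t => t - δ t := by fun_prop
  have hinner (u : ℝ) : ∫ v in (0:ℝ)..1, diagCopula δ u v =
      (∫ v in (0:ℝ)..1, min u v) - ∫ v in (0:ℝ)..1, diagDefect (fun t => t - δ t) u v := by
    simp only [diagCopula_eq_min_sub_diagDefect]
    exact intervalIntegral.integral_sub (Continuous.intervalIntegrable (by fun_prop) _ _)
      (Continuous.intervalIntegrable (by unfold diagDefect; fun_prop) _ _)
  unfold spearmanRho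
  simp only [hinner]
  rw [intervalIntegral.integral_sub (Continuous.intervalIntegrable (by fun_prop) _ _)
    ((continuous_integral_diagDefect hg).intervalIntegrable _ _), integral_integral_min]
  ring

theorem spearmanRho_diagCopula_le {δ : ℝ → ℝ} (hδ : Continuous δ)
    (hδ_bounds : ∀ u ∈ Icc (0:ℝ) 1, max (2 * u - 1) 0 ≤ δ u ∧ δ u ≤ u) :
    spearmanRho (diagCopula δ) ≤ 1 - 2 / 3 * (1 - (6 * (∫ u in (0:ℝ)..1, δ u) - 2)) ^ 2 := by
  have hint : ∫ u in (0:ℝ)..1, δ u = 1 / 2 - ∫ u in (0:ℝ)..1, (u - δ u) := by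
    rw [intervalIntegral.integral_sub intervalIntegral.intervalIntegrable_id
      (hδ.intervalIntegrable _ _), integral_id]
    ring
  have hcore := two_mul_sq_integral_le_integral_integral_diagDefect (g := fun t => t - δ t)
    (by fun_prop) (fun u hu => by linarith [(hδ_bounds u hu).2])
    (fun u hu => by linarith [le_max_right (2 * u - 1) 0, (hδ_bounds u hu).1])
    (fun u hu => by linarith [le_max_left (2 * u - 1) 0, (hδ_bounds u hu).1])
  rw [spearmanRho_diagCopula_eq hδ, hint]
  linear_combination 12 * hcore

theorem diag_copula_rho_upper_bound (δ δ' : ℝ → ℝ) (hδ : SmoothSymDiagonal δ δ') :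
    spearmanFootrule (diagCopula δ) = 6 * (∫ u in (0:ℝ)..1, δ u) - 2 ∧
    spearmanRho (diagCopula δ) ≤ 1 - 2/3 * (1 - spearmanFootrule (diagCopula δ)) ^ 2 := by
  obtain ⟨hcont, -, -, -, -, hrange, hsym, -⟩ := hδ
  have hbounds (u : ℝ) (hu : u ∈ Icc (0:ℝ) 1) : max (2 * u - 1) 0 ≤ δ u ∧ δ u ≤ u :=
    ⟨max_le (by linarith [hsym u hu, (hrange (1 - u) (Icc.mem_iff_one_sub_mem.1 hu)).1.1])
      (hrange u hu).1.1, (hrange u hu).2⟩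
  have hfoot := spearmanFootrule_diagCopula fun u hu => (hbounds u hu).2
  refine ⟨hfoot, ?_⟩
  obtain ⟨δ₀, hδ₀, hδ₀_eq⟩ := hcont.exists_continuous_eqOn_Icc zero_le_one
  rw [hfoot, ← spearmanRho_diagCopula_congr hδ₀_eq,
    ← integral_congr (by rwa [uIcc_of_le zero_le_one] : EqOn δ₀ δ (uIcc 0 1))]
  exact spearmanRho_diagCopula_le hδ₀ fun u hu => hδ₀_eq hu ▸ hbounds u hu
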